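/- Suppose α is badly approximable and for each convergent denominator q there is an integer i_q with |i_q| < q such that q‖-t - i_q α‖ → 0 as q → ∞ along convergent denominators. Then i_q is eventually constant, and consequently t ∈ ℤα (mod 1). -/

import Mathlib

open Set Filter MeasureTheory

/-- Distance from a real number to the nearest integer. -/
noncomputable def nearInt (y : ℝ) : ℝ := |y - round y|

/-- Iterates of the Gauss map starting from `Int.fract α`. -/
noncomputable def gaussIter (α : ℝ) : ℕ → ℝ
  | 0 => Int.fract α
  | n + 1 => Int.fract (gaussIter α n)⁻¹

/-- `cfAq α k` is the partial quotient `a_{k+1}` of the continued fraction of `α`. -/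
noncomputable def cfAq (α : ℝ) (k : ℕ) : ℕ := (⌊(gaussIter α k)⁻¹⌋).toNat

/-- `cfQ α k` is the denominator `q_k` of the `k`-th convergent of `α`. -/
noncomputable def cfQ (α : ℝ) : ℕ → ℕ
  | 0 => 1
  | 1 => cfAq α 0
  | n + 2 => cfAq α (n + 1) * cfQ α (n + 1) + cfQ α n

/-- `cfP α k` is the numerator `p_k` of the `k`-th convergent of `α`. -/
noncomputable def cfP (α : ℝ) : ℕ → ℤ
  | 0 => ⌊α⌋
  | 1 => cfAq α 0 * ⌊α⌋ + 1
  | n + 2 => cfAq α (n + 1) * cfP α (n + 1) + cfP α n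

/-- `α` is badly approximable: its continued fraction partial quotients are bounded. -/
def BadlyApprox (α : ℝ) : Prop := ∃ B : ℕ, ∀ k, cfAq α k ≤ B

/-!
If `i_k ≠ i_{k+1}`, then `m = i_{k+1} - i_k` is a nonzero integer with `|m| < q_k + q_{k+1} ≤ q_{k+2}`,
so by the best approximation property of convergents `‖mα‖ > 1/(2 q_{k+2}) ≥ 1/(2(B+1) q_{k+1})`,
where `B` bounds the partial quotients.
On the other hand `‖mα‖ ≤ ‖-t - i_k α‖ + ‖-t - i_{k+1} α‖ = o(1/q_k) = o(1/q_{k+1})` since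
`q_{k+1} ≤ (B+1) q_k`. Hence `i_k` is eventually a constant `c`, and then `q_k ‖-t - cα‖ → 0` forces
`‖-t - cα‖ = 0`.
-/

open Topology

lemma nearInt_nonneg (y : ℝ) : 0 ≤ nearInt y := abs_nonneg _

lemma nearInt_sub_le (a b : ℝ) : nearInt (a - b) ≤ nearInt a + nearInt b :=
  calc nearInt (a - b) ≤ |a - b - ((round a - round b : ℤ) : ℝ)| := round_le _ _
    _ = |(a - round a) - (b - round b)| := by congr 1; push_cast; ring
    _ ≤ nearInt a + nearInt b := abs_sub _ _

lemma eq_round_of_nearInt_eq_zero {y : ℝ} (h : nearInt y = 0) : y = round y :=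
  sub_eq_zero.1 (abs_eq_zero.1 h)

lemma Irrational.fract {x : ℝ} (hx : Irrational x) : Irrational (Int.fract x) :=
  hx.sub_intCast _

lemma Irrational.fract_pos {x : ℝ} (hx : Irrational x) : 0 < Int.fract x :=
  Int.fract_pos.2 (hx.ne_int _)

lemma one_le_abs_sub_mul {x y : ℤ} {g : ℝ} (hx : x ≠ 0) (hxy : x * y ≤ 0) (hg : 0 ≤ g) :
    1 ≤ |(x : ℝ) - y * g| := by
  rcases hx.lt_or_gt with hx | hx
  · have hy : (0 : ℝ) ≤ y := by exact_mod_cast nonneg_of_mul_nonpos_right hxy hx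
    have hx : (x : ℝ) ≤ -1 := by exact_mod_cast Int.le_sub_one_of_lt hx
    exact le_abs'.2 (Or.inl (by nlinarith))
  · have hy : (y : ℝ) ≤ 0 := by exact_mod_cast nonpos_of_mul_nonpos_right hxy hx
    have hx : (1 : ℝ) ≤ x := by exact_mod_cast hx
    exact le_abs'.2 (Or.inr (by nlinarith))

section ContinuedFraction

variable {α : ℝ}

lemma irrational_gaussIter (hα : Irrational α) : ∀ n, Irrational (gaussIter α n)
  | 0 => hα.fract
  | n + 1 => (irrational_gaussIter hα n).inv.fract

lemma gaussIter_pos (hα : Irrational α) : ∀ n, 0 < gaussIter α n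
  | 0 => hα.fract_pos
  | n + 1 => (irrational_gaussIter hα n).inv.fract_pos

lemma gaussIter_lt_one : ∀ n, gaussIter α n < 1
  | 0 => Int.fract_lt_one _
  | _ + 1 => Int.fract_lt_one _

lemma one_le_floor_inv_gaussIter (hα : Irrational α) (n : ℕ) : 1 ≤ ⌊(gaussIter α n)⁻¹⌋ :=
  Int.le_floor.2 <| by exact_mod_cast (one_le_inv₀ (gaussIter_pos hα n)).2 (gaussIter_lt_one n).le

lemma one_le_cfAq (hα : Irrational α) (n : ℕ) : 1 ≤ cfAq α n := by
  have := one_le_floor_inv_gaussIter hα n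
  unfold cfAq
  omega

lemma gaussIter_succ (hα : Irrational α) (n : ℕ) :
    gaussIter α (n + 1) = (gaussIter α n)⁻¹ - cfAq α n := by
  have h : ((cfAq α n : ℤ) : ℝ) = ⌊(gaussIter α n)⁻¹⌋ := by
    unfold cfAq
    rw [Int.toNat_of_nonneg (zero_le_one.trans (one_le_floor_inv_gaussIter hα n))]
  rw [← Int.cast_natCast, h]
  rfl

lemma one_le_cfQ (hα : Irrational α) : ∀ n, 1 ≤ cfQ α n
  | 0 => le_rfl
  | 1 => one_le_cfAq hα 0
  | n + 2 => (one_le_cfQ hα n).trans (Nat.le_add_left _ _)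

lemma cfQ_le_cfQ_succ (hα : Irrational α) : ∀ n, cfQ α n ≤ cfQ α (n + 1)
  | 0 => one_le_cfAq hα 0
  | n + 1 => (Nat.le_mul_of_pos_left _ (one_le_cfAq hα (n + 1))).trans (Nat.le_add_right _ _)

lemma cfQ_add_cfQ_succ_le (hα : Irrational α) (n : ℕ) : cfQ α n + cfQ α (n + 1) ≤ cfQ α (n + 2) :=
  calc cfQ α n + cfQ α (n + 1) ≤ cfQ α n + cfAq α (n + 1) * cfQ α (n + 1) :=
        Nat.add_le_add_left (Nat.le_mul_of_pos_left _ (one_le_cfAq hα (n + 1))) _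
    _ = cfQ α (n + 2) := Nat.add_comm _ _

lemma cfQ_succ_le {B : ℕ} (hα : Irrational α) (hB : ∀ k, cfAq α k ≤ B) :
    ∀ n, cfQ α (n + 1) ≤ (B + 1) * cfQ α n
  | 0 => by simpa [cfQ] using (hB 0).trans (Nat.le_succ B)
  | n + 1 => by
    have := cfQ_le_cfQ_succ hα n
    have := Nat.mul_le_mul_right (cfQ α (n + 1)) (hB (n + 1))
    show cfAq α (n + 1) * cfQ α (n + 1) + cfQ α n ≤ (B + 1) * cfQ α (n + 1)
    linarith

lemma cfP_mul_cfQ_succ_sub : ∀ n,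
    cfP α n * cfQ α (n + 1) - cfP α (n + 1) * cfQ α n = (-1) ^ (n + 1)
  | 0 => by simp only [cfP, cfQ]; ring
  | n + 1 => by
    have ih := cfP_mul_cfQ_succ_sub n
    simp only [cfQ, cfP, pow_succ] at ih ⊢
    push_cast
    linear_combination -ih

lemma exists_cfQ_cfP_combination (k : ℕ) (m p : ℤ) :
    ∃ x y : ℤ, x * cfQ α k + y * cfQ α (k + 1) = m ∧ x * cfP α k + y * cfP α (k + 1) = p := by
  set D := cfP α k * cfQ α (k + 1) - cfP α (k + 1) * cfQ α k
  have hD : D * D = 1 := by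
    rw [show D = (-1) ^ (k + 1) from cfP_mul_cfQ_succ_sub k, ← pow_add]
    exact Even.neg_one_pow ⟨k + 1, rfl⟩
  exact ⟨D * (cfQ α (k + 1) * p - cfP α (k + 1) * m), D * (cfP α k * m - cfQ α k * p),
    by linear_combination m * hD, by linear_combination p * hD⟩

noncomputable def cfEta (α : ℝ) (k : ℕ) : ℝ := cfQ α k * α - cfP α k

lemma cfEta_ne_zero (hα : Irrational α) (k : ℕ) : cfEta α k ≠ 0 :=
  ((hα.natCast_mul (Nat.one_le_iff_ne_zero.1 (one_le_cfQ hα k))).sub_intCast _).ne_zero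

lemma cfEta_succ (hα : Irrational α) : ∀ k, cfEta α (k + 1) = -gaussIter α (k + 1) * cfEta α k
  | 0 => by
    have hinv := inv_mul_cancel₀ (gaussIter_pos hα 0).ne'
    have h0 : gaussIter α 0 = α - ⌊α⌋ := rfl
    simp only [cfEta, cfQ, cfP, gaussIter_succ hα 0]
    push_cast
    linear_combination -(gaussIter α 0)⁻¹ * h0 + hinv
  | k + 1 => by
    have ih := cfEta_succ hα k
    have hg := (gaussIter_pos hα (k + 1)).ne'
    have hrec : cfEta α (k + 2) = cfAq α (k + 1) * cfEta α (k + 1) + cfEta α k := by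
      simp only [cfEta, cfQ, cfP]
      push_cast
      ring
    rw [hrec, gaussIter_succ hα (k + 1), ih]
    field_simp
    ring

lemma abs_cfEta_succ_lt (hα : Irrational α) (k : ℕ) : |cfEta α (k + 1)| < |cfEta α k| := by
  rw [cfEta_succ hα, abs_mul, abs_neg, abs_of_pos (gaussIter_pos hα _)]
  exact mul_lt_of_lt_one_left (abs_pos.2 (cfEta_ne_zero hα k)) (gaussIter_lt_one _)

lemma one_lt_cfQ_add_cfQ_succ_mul_abs_cfEta (hα : Irrational α) (k : ℕ) :
    1 < (cfQ α k + cfQ α (k + 1)) * |cfEta α k| := by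
  have hdet : (cfQ α k : ℝ) * cfEta α (k + 1) - cfQ α (k + 1) * cfEta α k = (-1) ^ (k + 1) := by
    have := congrArg (Int.cast : ℤ → ℝ) (cfP_mul_cfQ_succ_sub (α := α) k)
    push_cast at this
    simp only [cfEta]
    linear_combination this
  have hq : (0 : ℝ) < cfQ α k := by exact_mod_cast one_le_cfQ hα k
  calc (1 : ℝ) = |(cfQ α k : ℝ) * cfEta α (k + 1) - cfQ α (k + 1) * cfEta α k| := by
        rw [hdet, abs_pow, abs_neg, abs_one, one_pow]
    _ ≤ cfQ α k * |cfEta α (k + 1)| + cfQ α (k + 1) * |cfEta α k| := by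
        simpa only [abs_mul, Nat.abs_cast] using
          abs_sub ((cfQ α k : ℝ) * cfEta α (k + 1)) (cfQ α (k + 1) * cfEta α k)
    _ < (cfQ α k + cfQ α (k + 1)) * |cfEta α k| := by
        nlinarith [abs_cfEta_succ_lt hα k]

lemma abs_cfEta_le_abs_mul_sub (hα : Irrational α) {k : ℕ} {m : ℤ} (p : ℤ) (hm : m ≠ 0)
    (hmq : |m| < cfQ α (k + 1)) : |cfEta α k| ≤ |m * α - p| := by
  -- coordinates of `(m, p)` in the unimodular basis `(q_k, p_k), (q_{k+1}, p_{k+1})`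
  obtain ⟨x, y, hxm, hyp⟩ := exists_cfQ_cfP_combination (α := α) k m p
  have hq0 : (0 : ℤ) < cfQ α k := by exact_mod_cast one_le_cfQ hα k
  have hx : x ≠ 0 := by
    rintro rfl
    have hy : y ≠ 0 := by rintro rfl; simp [← hxm] at hm
    rw [← hxm, zero_mul, zero_add, abs_mul, Nat.abs_cast] at hmq
    nlinarith [Int.one_le_abs hy]
  have hxy : x * y ≤ 0 := by
    by_contra! hxy
    rw [← hxm] at hmq
    rcases lt_or_gt_of_ne hx with hx | hx
    · have hy : y < 0 := neg_of_mul_pos_right hxy hx.le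
      nlinarith [neg_abs_le (x * cfQ α k + y * cfQ α (k + 1))]
    · have hy : 0 < y := pos_of_mul_pos_right hxy hx.le
      nlinarith [le_abs_self (x * cfQ α k + y * cfQ α (k + 1))]
  have hfactor : (m : ℝ) * α - p = cfEta α k * (x - y * gaussIter α (k + 1)) := by
    have hxm : (x * cfQ α k + y * cfQ α (k + 1) : ℝ) = m := by exact_mod_cast hxm
    have hyp : (x * cfP α k + y * cfP α (k + 1) : ℝ) = p := by exact_mod_cast hyp
    have hη := cfEta_succ hα k
    simp only [cfEta] at hη ⊢
    linear_combination -α * hxm + hyp + y * hη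
  rw [hfactor, abs_mul]
  exact le_mul_of_one_le_right (abs_nonneg _)
    (one_le_abs_sub_mul hx hxy (gaussIter_pos hα _).le)

lemma one_lt_two_mul_cfQ_mul_nearInt (hα : Irrational α) {k : ℕ} {m : ℤ} (hm : m ≠ 0)
    (hmq : |m| < cfQ α (k + 1)) : 1 < 2 * cfQ α (k + 1) * nearInt (m * α) := by
  have hη := abs_cfEta_le_abs_mul_sub hα (round ((m : ℝ) * α)) hm hmq
  have hq : (cfQ α k : ℝ) ≤ cfQ α (k + 1) := by exact_mod_cast cfQ_le_cfQ_succ hα k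
  calc 1 < (cfQ α k + cfQ α (k + 1)) * |cfEta α k| := one_lt_cfQ_add_cfQ_succ_mul_abs_cfEta hα k
    _ ≤ 2 * cfQ α (k + 1) * nearInt (m * α) := by
      gcongr ?_ * ?_
      · linarith
      · exact hη

end ContinuedFraction

lemma exists_forall_ge_eq_of_eventually_succ_eq {β : Type*} {u : ℕ → β}
    (h : ∀ᶠ k in atTop, u (k + 1) = u k) : ∃ N, ∀ k, N ≤ k → u k = u N := by
  obtain ⟨N, hN⟩ := eventually_atTop.1 h
  refine ⟨N, fun k hk => ?_⟩
  induction k, hk using Nat.le_induction with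
  | base => rfl
  | succ k hk ih => rw [hN k hk, ih]

section Limit

variable {α : ℝ} {B : ℕ}

lemma cfQ_succ_mul_nearInt_sub_le (hα : Irrational α) (hB : ∀ k, cfAq α k ≤ B) (t : ℝ) (k : ℕ)
    (a b : ℤ) : cfQ α (k + 1) * nearInt ((b - a : ℤ) * α)
      ≤ (B + 1) * (cfQ α k * nearInt (-t - a * α)) + cfQ α (k + 1) * nearInt (-t - b * α) := by
  have hq : (cfQ α (k + 1) : ℝ) ≤ (B + 1) * cfQ α k := by exact_mod_cast cfQ_succ_le hα hB k
  have htri : nearInt ((b - a : ℤ) * α) ≤ nearInt (-t - a * α) + nearInt (-t - b * α) := by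
    convert nearInt_sub_le (-t - a * α) (-t - b * α) using 2
    push_cast
    ring
  have ha := nearInt_nonneg (-t - a * α)
  calc _ ≤ cfQ α (k + 1) * (nearInt (-t - a * α) + nearInt (-t - b * α)) := by gcongr
    _ ≤ _ := by rw [mul_add, ← mul_assoc]; gcongr

lemma eventually_succ_eq_of_tendsto (hα : Irrational α) (hB : ∀ k, cfAq α k ≤ B) {t : ℝ}
    {i : ℕ → ℤ} (hi : ∀ k, |i k| < (cfQ α k : ℤ))
    (hlim : Tendsto (fun k ↦ (cfQ α k : ℝ) * nearInt (-t - i k * α)) atTop (𝓝 0)) :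
    ∀ᶠ k in atTop, i (k + 1) = i k := by
  have hsmall : ∀ᶠ k in atTop, 2 * (B + 1) * ((B + 1) * (cfQ α k * nearInt (-t - i k * α))
      + cfQ α (k + 1) * nearInt (-t - i (k + 1) * α)) < (1 : ℝ) := by
    refine Tendsto.eventually_lt_const one_pos ?_
    simpa using ((hlim.const_mul (B + 1 : ℝ)).add
      (hlim.comp (tendsto_add_atTop_nat 1))).const_mul (2 * (B + 1 : ℝ))
  filter_upwards [hsmall] with k hk
  by_contra hne
  have hm : |i (k + 1) - i k| < cfQ α (k + 2) := by
    have := cfQ_add_cfQ_succ_le hα k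
    have := abs_sub (i (k + 1)) (i k)
    have := hi k
    have := hi (k + 1)
    omega
  have hq : (cfQ α (k + 2) : ℝ) ≤ (B + 1) * cfQ α (k + 1) := by
    exact_mod_cast cfQ_succ_le hα hB (k + 1)
  have hn := nearInt_nonneg (((i (k + 1) - i k : ℤ) : ℝ) * α)
  have hup := cfQ_succ_mul_nearInt_sub_le hα hB t k (i k) (i (k + 1))
  refine lt_irrefl (1 : ℝ) ?_
  calc (1 : ℝ) < 2 * cfQ α (k + 2) * nearInt (((i (k + 1) - i k : ℤ) : ℝ) * α) :=
        one_lt_two_mul_cfQ_mul_nearInt hα (sub_ne_zero.2 hne) hm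
    _ ≤ 2 * (B + 1) * (cfQ α (k + 1) * nearInt (((i (k + 1) - i k : ℤ) : ℝ) * α)) := by
        linarith [mul_le_mul_of_nonneg_right hq hn]
    _ ≤ _ := by gcongr
    _ < 1 := hk

lemma nearInt_eq_zero_of_tendsto (hα : Irrational α) {t : ℝ} {i : ℕ → ℤ} {c : ℤ} {N : ℕ}
    (hN : ∀ k, N ≤ k → i k = c)
    (hlim : Tendsto (fun k ↦ (cfQ α k : ℝ) * nearInt (-t - i k * α)) atTop (𝓝 0)) :
    nearInt (-t - c * α) = 0 := by
  refine le_antisymm (ge_of_tendsto hlim (eventually_atTop.2 ⟨N, fun k hk ↦ ?_⟩))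
    (nearInt_nonneg _)
  rw [hN k hk]
  exact le_mul_of_one_le_left (nearInt_nonneg _) (by exact_mod_cast one_le_cfQ hα k)

end Limit

theorem stmt19_general (α : ℝ) (hα : Irrational α)
    (hbad : BadlyApprox α) (t : ℝ)
    (i : ℕ → ℤ) (hi : ∀ k, |i k| < (cfQ α k : ℤ))
    (hlim : Filter.Tendsto (fun k : ℕ => (cfQ α k : ℝ) * nearInt (-t - (i k : ℝ) * α))
      Filter.atTop (nhds 0)) :
    (∃ N : ℕ, ∀ k, N ≤ k → i k = i N) ∧ (∃ n m : ℤ, t = (n : ℝ) * α + m) := by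
  obtain ⟨B, hB⟩ := hbad
  obtain ⟨N, hN⟩ :=
    exists_forall_ge_eq_of_eventually_succ_eq (eventually_succ_eq_of_tendsto hα hB hi hlim)
  have hround := eq_round_of_nearInt_eq_zero (nearInt_eq_zero_of_tendsto hα hN hlim)
  refine ⟨⟨N, hN⟩, -i N, -round (-t - i N * α), ?_⟩
  push_cast
  linarith

/-- If `α` is badly approximable and `i_q` are integers with `|i_q| < q` such that
`q‖-t - i_q α‖ → 0` along convergent denominators `q`, then `i_q` is eventually constant
and `t ∈ ℤα (mod 1)`. -/
theorem stmt19 (α : ℝ) (hα : Irrational α) (hα0 : 0 < α) (hα1 : α < 1)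
    (hbad : BadlyApprox α) (t : ℝ) (ht : t ∈ Set.Ico (0:ℝ) 1)
    (i : ℕ → ℤ) (hi : ∀ k, |i k| < (cfQ α k : ℤ))
    (hlim : Filter.Tendsto (fun k : ℕ => (cfQ α k : ℝ) * nearInt (-t - (i k : ℝ) * α))
      Filter.atTop (nhds 0)) :
    (∃ N : ℕ, ∀ k, N ≤ k → i k = i N) ∧ (∃ n m : ℤ, t = (n : ℝ) * α + m) :=
  stmt19_general α hα hbad t i hi hlim
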